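/- arXiv:1011.5093 — 2 statements merged into one kernel-verified Lean document; each statement's English description precedes it below -/
import Mathlib

section
/- Let Λ be a proper Lorentz transformation satisfying condition (CM) for p, q ∈ ℝⁿ, and define k ∈ ℝⁿ by k^i = Λ^i_μ (p^μ − q^μ) for i = 1, …, n (the spatial rows of Λ applied to p^μ − q^μ). Then |k| = ϱ(p,q). -/
noncomputable section

open MeasureTheory Metric Matrix

namespace RelBoltz

/-- The energy `p⁰ = √(c² + |p|²)` of a relativistic particle with momentum `p ∈ ℝⁿ`. -/
def energy (n : ℕ) (c : ℝ) (p : EuclideanSpace ℝ (Fin n)) : ℝ :=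
  Real.sqrt (c ^ 2 + ‖p‖ ^ 2)

/-- The Euclidean dot product on `ℝⁿ`. -/
def dot (n : ℕ) (p q : EuclideanSpace ℝ (Fin n)) : ℝ := ∑ i, p i * q i

/-- The relative momentum `ϱ(p,q) = √(2(p⁰q⁰ − p·q − c²))`. -/
def relMom (n : ℕ) (c : ℝ) (p q : EuclideanSpace ℝ (Fin n)) : ℝ :=
  Real.sqrt (2 * (energy n c p * energy n c q - dot n p q - c ^ 2))

/-- The quantity `s(p,q) = 2(p⁰q⁰ − p·q + c²)`. -/
def sQ (n : ℕ) (c : ℝ) (p q : EuclideanSpace ℝ (Fin n)) : ℝ :=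
  2 * (energy n c p * energy n c q - dot n p q + c ^ 2)

/-- The Minkowski metric `g = diag(−1, 1, …, 1)` as a `(1+n)×(1+n)` matrix. -/
def eta (n : ℕ) : Matrix (Fin (n + 1)) (Fin (n + 1)) ℝ :=
  Matrix.diagonal fun μ => if μ = 0 then -1 else 1

/-- A proper Lorentz transformation: `det Λ = 1` and `Λᵀ g Λ = g`. -/
def IsLorentz (n : ℕ) (Λ : Matrix (Fin (n + 1)) (Fin (n + 1)) ℝ) : Prop :=
  Λ.det = 1 ∧ Λᵀ * eta n * Λ = eta n

/-- The four-vector `p^μ = (p⁰, p) ∈ ℝ^{1+n}`. -/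
def fourVec (n : ℕ) (c : ℝ) (p : EuclideanSpace ℝ (Fin n)) : Fin (n + 1) → ℝ :=
  Fin.cons (energy n c p) fun i => p i

/-- Condition (CM): `Λ^μ_ν (p^ν + q^ν) = (√s, 0, …, 0)`. -/
def CM (n : ℕ) (c : ℝ) (Λ : Matrix (Fin (n + 1)) (Fin (n + 1)) ℝ)
    (p q : EuclideanSpace ℝ (Fin n)) : Prop :=
  Λ.mulVec (fourVec n c p + fourVec n c q) = Fin.cons (Real.sqrt (sQ n c p q)) (fun _ => (0 : ℝ))

/-- The candidate inverse `g Λᵀ g` of a Lorentz transformation. -/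
def Linv (n : ℕ) (Λ : Matrix (Fin (n + 1)) (Fin (n + 1)) ℝ) :
    Matrix (Fin (n + 1)) (Fin (n + 1)) ℝ :=
  eta n * Λᵀ * eta n

/-- The quantity `ρ = (p⁰+q⁰)/√s` appearing in the boost matrix. -/
def rhoB (n : ℕ) (c : ℝ) (p q : EuclideanSpace ℝ (Fin n)) : ℝ :=
  (energy n c p + energy n c q) / Real.sqrt (sQ n c p q)

/-- The boost matrix `Λ_b = [[ρ, −ρ vᵀ], [−ρ v, Iₙ + (ρ−1) v vᵀ/|v|²]]`
with `v = (p+q)/(p⁰+q⁰)`. -/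
def boost (n : ℕ) (c : ℝ) (p q : EuclideanSpace ℝ (Fin n)) :
    Matrix (Fin (n + 1)) (Fin (n + 1)) ℝ :=
  Matrix.of fun μ ν =>
    Fin.cases
      (Fin.cases (rhoB n c p q)
        (fun j => -rhoB n c p q * ((p j + q j) / (energy n c p + energy n c q))) ν)
      (fun i =>
        Fin.cases (-rhoB n c p q * ((p i + q i) / (energy n c p + energy n c q)))
          (fun j =>
            (if i = j then (1 : ℝ) else 0) +
              (rhoB n c p q - 1) *
                ((p i + q i) / (energy n c p + energy n c q)) *
                ((p j + q j) / (energy n c p + energy n c q)) /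
                (∑ k, ((p k + q k) / (energy n c p + energy n c q)) ^ 2)) ν) μ

/-- The vector `k ∈ ℝⁿ`, `k^i = Λ^i_μ (p^μ − q^μ)` (spatial rows of `Λ` applied
to `p^μ − q^μ`). -/
def kvec (n : ℕ) (c : ℝ) (Λ : Matrix (Fin (n + 1)) (Fin (n + 1)) ℝ)
    (p q : EuclideanSpace ℝ (Fin n)) : EuclideanSpace ℝ (Fin n) :=
  WithLp.toLp 2 fun i : Fin n => Λ.mulVec (fourVec n c p - fourVec n c q) i.succ

/-- `ω̄^μ = (√s/2, (ϱ/2)ω)`. -/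
def wbar (n : ℕ) (c : ℝ) (p q ω : EuclideanSpace ℝ (Fin n)) : Fin (n + 1) → ℝ :=
  Fin.cons (Real.sqrt (sQ n c p q) / 2) fun i => (relMom n c p q / 2) * ω i

/-- `ω̃^μ = (√s/2, −(ϱ/2)ω)`. -/
def wtil (n : ℕ) (c : ℝ) (p q ω : EuclideanSpace ℝ (Fin n)) : Fin (n + 1) → ℝ :=
  Fin.cons (Real.sqrt (sQ n c p q) / 2) fun i => -(relMom n c p q / 2) * ω i

/-- The center-of-momentum post-collisional four-vector `p′^μ = (Λ⁻¹)^μ_ν ω̄^ν`. -/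
def postP (n : ℕ) (c : ℝ) (Λ : Matrix (Fin (n + 1)) (Fin (n + 1)) ℝ)
    (p q ω : EuclideanSpace ℝ (Fin n)) : Fin (n + 1) → ℝ :=
  (Linv n Λ).mulVec (wbar n c p q ω)

/-- The center-of-momentum post-collisional four-vector `q′^μ = (Λ⁻¹)^μ_ν ω̃^ν`. -/
def postQ (n : ℕ) (c : ℝ) (Λ : Matrix (Fin (n + 1)) (Fin (n + 1)) ℝ)
    (p q ω : EuclideanSpace ℝ (Fin n)) : Fin (n + 1) → ℝ :=
  (Linv n Λ).mulVec (wtil n c p q ω)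

/-- The spatial part of a vector in `ℝ^{1+n}`. -/
def spat (n : ℕ) (u : Fin (n + 1) → ℝ) : EuclideanSpace ℝ (Fin n) :=
  WithLp.toLp 2 fun i : Fin n => u i.succ

/-- `D₁ = (p⁰+q⁰)² − (ω·(p+q))²`. -/
def D1 (n : ℕ) (c : ℝ) (p q ω : EuclideanSpace ℝ (Fin n)) : ℝ :=
  (energy n c p + energy n c q) ^ 2 - dot n ω (p + q) ^ 2

/-- `D₂ = (p⁰+q⁰){ω·(p⁰q − q⁰p)}`. -/
def D2 (n : ℕ) (c : ℝ) (p q ω : EuclideanSpace ℝ (Fin n)) : ℝ :=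
  (energy n c p + energy n c q) * dot n ω (energy n c p • q - energy n c q • p)

/-- `a(p,q,ω) = 2(p⁰+q⁰){ω·(p⁰q − q⁰p)}/D₁`. -/
def aGS (n : ℕ) (c : ℝ) (p q ω : EuclideanSpace ℝ (Fin n)) : ℝ :=
  2 * (energy n c p + energy n c q) * dot n ω (energy n c p • q - energy n c q • p) /
    D1 n c p q ω

/-- `N⁰(p,q,ω) = 2{ω·(p+q)}{ω·(p⁰q − q⁰p)}/D₁`. -/
def N0 (n : ℕ) (c : ℝ) (p q ω : EuclideanSpace ℝ (Fin n)) : ℝ :=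
  2 * dot n ω (p + q) * dot n ω (energy n c p • q - energy n c q • p) / D1 n c p q ω

/-- The Glassey–Strauss post-collisional momentum `p′ = p + a(p,q,ω)ω`. -/
def gsP (n : ℕ) (c : ℝ) (p q ω : EuclideanSpace ℝ (Fin n)) : EuclideanSpace ℝ (Fin n) :=
  p + aGS n c p q ω • ω

/-- The Glassey–Strauss post-collisional momentum `q′ = q − a(p,q,ω)ω`. -/
def gsQ (n : ℕ) (c : ℝ) (p q ω : EuclideanSpace ℝ (Fin n)) : EuclideanSpace ℝ (Fin n) :=
  q - aGS n c p q ω • ω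

/-- The Glassey–Strauss kernel `B(p,q,ω)`. -/
def BGS (n : ℕ) (c : ℝ) (p q ω : EuclideanSpace ℝ (Fin n)) : ℝ :=
  c * (energy n c p + energy n c q) ^ 2 * energy n c p * energy n c q *
    |dot n ω ((energy n c p)⁻¹ • p - (energy n c q)⁻¹ • q)| / D1 n c p q ω ^ 2

/-- The dimensional factor `A(p,q,ω)`. -/
def AGS (n : ℕ) (c : ℝ) (p q ω : EuclideanSpace ℝ (Fin n)) : ℝ :=
  (4 / relMom n c p q) * (energy n c p + energy n c q) * energy n c p * energy n c q *
    |dot n ω ((energy n c p)⁻¹ • p - (energy n c q)⁻¹ • q)| / D1 n c p q ω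

/-- The dimensional Glassey–Strauss kernel `B_n(p,q,ω) = B(p,q,ω)·(A(p,q,ω))^{n−3}`. -/
def Bn (n : ℕ) (c : ℝ) (p q ω : EuclideanSpace ℝ (Fin n)) : ℝ :=
  BGS n c p q ω * AGS n c p q ω ^ ((n : ℤ) - 3)

/-- The Møller velocity `v_ø(p,q) = (c/4) ϱ √s / (p⁰q⁰)`. -/
def moller (n : ℕ) (c : ℝ) (p q : EuclideanSpace ℝ (Fin n)) : ℝ :=
  (c / 4) * relMom n c p q * Real.sqrt (sQ n c p q) / (energy n c p * energy n c q)

/-- The explicit boost form of the combination appearing in the center-of-momentum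
post-collisional momenta. -/
def cmDir (n : ℕ) (c : ℝ) (p q ω : EuclideanSpace ℝ (Fin n)) : EuclideanSpace ℝ (Fin n) :=
  ω + ((rhoB n c p q - 1) * dot n (p + q) ω / ‖p + q‖ ^ 2) • (p + q)

/-- The explicit boost form of the center-of-momentum post-collisional momentum `p′`. -/
def cmP (n : ℕ) (c : ℝ) (p q ω : EuclideanSpace ℝ (Fin n)) : EuclideanSpace ℝ (Fin n) :=
  (1 / 2 : ℝ) • (p + q) + (relMom n c p q / 2) • cmDir n c p q ω

/-- The explicit boost form of the center-of-momentum post-collisional momentum `q′`. -/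
def cmQ (n : ℕ) (c : ℝ) (p q ω : EuclideanSpace ℝ (Fin n)) : EuclideanSpace ℝ (Fin n) :=
  (1 / 2 : ℝ) • (p + q) - (relMom n c p q / 2) • cmDir n c p q ω

/-- The explicit boost form of the vector `k`. -/
def kB (n : ℕ) (c : ℝ) (p q : EuclideanSpace ℝ (Fin n)) : EuclideanSpace ℝ (Fin n) :=
  (-(energy n c p - energy n c q) / Real.sqrt (sQ n c p q)) • (p + q) + (p - q) +
    ((rhoB n c p q - 1) * dot n (p + q) (p - q) / ‖p + q‖ ^ 2) • (p + q)

/-- The center-of-momentum scattering angle `cos θ_cm = (k/|k|)·ω`. -/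
def cosCM (n : ℕ) (c : ℝ) (p q ω : EuclideanSpace ℝ (Fin n)) : ℝ :=
  dot n (kB n c p q) ω / ‖kB n c p q‖

/-- The Glassey–Strauss scattering angle
`cos θ_gs = 1 − 8{ω·(p⁰q − q⁰p)}²/(D₁ϱ²)`. -/
def cosGS (n : ℕ) (c : ℝ) (p q ω : EuclideanSpace ℝ (Fin n)) : ℝ :=
  1 - 8 * dot n ω (energy n c p • q - energy n c q • p) ^ 2 /
    (D1 n c p q ω * relMom n c p q ^ 2)

/-- The surface measure on the unit sphere `S^{n−1} ⊂ ℝⁿ`. -/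
def sphMeasure (n : ℕ) : Measure (sphere (0 : EuclideanSpace ℝ (Fin n)) 1) :=
  (volume : Measure (EuclideanSpace ℝ (Fin n))).toSphere

/-! The total four-momentum `p^μ + q^μ` is Minkowski-orthogonal to `p^μ − q^μ`, because `p^μ`
and `q^μ` lie on the same mass shell `⟨x, x⟩ = −c²`. A Lorentz transformation carrying
`p^μ + q^μ` to `(√s, 0, …, 0)` therefore carries `p^μ − q^μ` to a purely spatial vector
`(0, k)`, and `|k|² = ⟨p − q, p − q⟩ = ϱ²` by invariance of the Minkowski form. -/

theorem dotProduct_mulVec_mulVec_of_transpose_mul_mul {ι R : Type*} [Fintype ι] [CommSemiring R]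
    {Λ G : Matrix ι ι R} (h : Λᵀ * G * Λ = G) (u v : ι → R) :
    Λ *ᵥ u ⬝ᵥ G *ᵥ (Λ *ᵥ v) = u ⬝ᵥ G *ᵥ v := by
  rw [dotProduct_mulVec, dotProduct_mulVec, ← vecMul_transpose, vecMul_vecMul, vecMul_vecMul,
    ← Matrix.mul_assoc, h, dotProduct_mulVec]

section Minkowski

variable {n : ℕ}

theorem dotProduct_eta_mulVec (u v : Fin (n + 1) → ℝ) :
    u ⬝ᵥ eta n *ᵥ v = -(u 0 * v 0) + ∑ i : Fin n, u i.succ * v i.succ := by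
  simp [eta, mulVec_diagonal, dotProduct, Fin.sum_univ_succ, Fin.succ_ne_zero, mul_comm]

theorem dotProduct_eta_mulVec_self (u : Fin (n + 1) → ℝ) :
    u ⬝ᵥ eta n *ᵥ u = ‖spat n u‖ ^ 2 - u 0 ^ 2 := by
  rw [dotProduct_eta_mulVec, EuclideanSpace.real_norm_sq_eq]
  simp only [spat, sq]
  ring

theorem cons_zero_dotProduct_eta_mulVec (a : ℝ) (v : Fin (n + 1) → ℝ) :
    (Fin.cons a fun _ => 0 : Fin (n + 1) → ℝ) ⬝ᵥ eta n *ᵥ v = -(a * v 0) := by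
  simp [dotProduct_eta_mulVec]

end Minkowski

section FourVector

variable {n : ℕ} {c : ℝ}

theorem dot_eq_inner (p q : EuclideanSpace ℝ (Fin n)) : dot n p q = inner ℝ p q := by
  simp [dot, PiLp.inner_apply, mul_comm]

theorem energy_sq (p : EuclideanSpace ℝ (Fin n)) : energy n c p ^ 2 = c ^ 2 + ‖p‖ ^ 2 :=
  Real.sq_sqrt (by positivity)

theorem norm_le_energy (p : EuclideanSpace ℝ (Fin n)) : ‖p‖ ≤ energy n c p :=
  Real.le_sqrt_of_sq_le (by nlinarith [sq_nonneg c])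

theorem dot_le_energy_mul_energy (p q : EuclideanSpace ℝ (Fin n)) :
    dot n p q ≤ energy n c p * energy n c q :=
  calc dot n p q ≤ ‖p‖ * ‖q‖ := (dot_eq_inner p q).trans_le (real_inner_le_norm p q)
    _ ≤ energy n c p * energy n c q :=
      mul_le_mul (norm_le_energy p) (norm_le_energy q) (norm_nonneg q) (Real.sqrt_nonneg _)

theorem sQ_pos (hc : 0 < c) (p q : EuclideanSpace ℝ (Fin n)) : 0 < sQ n c p q := by
  have := dot_le_energy_mul_energy (c := c) p q
  rw [sQ]
  positivity

theorem fourVec_dotProduct_eta_mulVec (p q : EuclideanSpace ℝ (Fin n)) :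
    fourVec n c p ⬝ᵥ eta n *ᵥ fourVec n c q = dot n p q - energy n c p * energy n c q := by
  simp only [fourVec, dotProduct_eta_mulVec, Fin.cons_zero, Fin.cons_succ, dot]
  ring

theorem fourVec_dotProduct_eta_mulVec_self (p : EuclideanSpace ℝ (Fin n)) :
    fourVec n c p ⬝ᵥ eta n *ᵥ fourVec n c p = -c ^ 2 := by
  rw [fourVec_dotProduct_eta_mulVec, dot_eq_inner, real_inner_self_eq_norm_sq, ← sq, energy_sq]
  ring

theorem add_fourVec_dotProduct_eta_mulVec_sub (p q : EuclideanSpace ℝ (Fin n)) :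
    (fourVec n c p + fourVec n c q) ⬝ᵥ eta n *ᵥ (fourVec n c p - fourVec n c q) = 0 := by
  rw [mulVec_sub, dotProduct_sub, add_dotProduct, add_dotProduct,
    fourVec_dotProduct_eta_mulVec_self, fourVec_dotProduct_eta_mulVec_self,
    fourVec_dotProduct_eta_mulVec, fourVec_dotProduct_eta_mulVec, dot_eq_inner, dot_eq_inner,
    real_inner_comm]
  ring

theorem sub_fourVec_dotProduct_eta_mulVec_self (p q : EuclideanSpace ℝ (Fin n)) :
    (fourVec n c p - fourVec n c q) ⬝ᵥ eta n *ᵥ (fourVec n c p - fourVec n c q) =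
      2 * (energy n c p * energy n c q - dot n p q - c ^ 2) := by
  rw [mulVec_sub, dotProduct_sub, sub_dotProduct, sub_dotProduct,
    fourVec_dotProduct_eta_mulVec_self, fourVec_dotProduct_eta_mulVec_self,
    fourVec_dotProduct_eta_mulVec, fourVec_dotProduct_eta_mulVec, dot_eq_inner, dot_eq_inner,
    real_inner_comm]
  ring

end FourVector

theorem statement4_general (n : ℕ) (c : ℝ) (hc : 0 < c)
    (p q : EuclideanSpace ℝ (Fin n)) (Λ : Matrix (Fin (n + 1)) (Fin (n + 1)) ℝ)
    (hΛ : IsLorentz n Λ) (hCM : CM n c Λ p q) :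
    ‖kvec n c Λ p q‖ = relMom n c p q := by
  rw [CM] at hCM
  set d := fourVec n c p - fourVec n c q
  have invariant := dotProduct_mulVec_mulVec_of_transpose_mul_mul hΛ.2
  have hd₀ : (Λ *ᵥ d) 0 = 0 := by
    have h := invariant (fourVec n c p + fourVec n c q) d
    rw [add_fourVec_dotProduct_eta_mulVec_sub, hCM, cons_zero_dotProduct_eta_mulVec,
      neg_eq_zero] at h
    exact (mul_eq_zero.mp h).resolve_left (Real.sqrt_pos.mpr (sQ_pos hc p q)).ne'
  have hk : ‖kvec n c Λ p q‖ ^ 2 = 2 * (energy n c p * energy n c q - dot n p q - c ^ 2) := by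
    have h := invariant d d
    rwa [dotProduct_eta_mulVec_self, hd₀, sub_fourVec_dotProduct_eta_mulVec_self,
      zero_pow two_ne_zero, sub_zero] at h
  rw [relMom, ← hk, Real.sqrt_sq (norm_nonneg _)]

/-- If `Λ` is a proper Lorentz transformation satisfying condition (CM)
for `p, q`, and `k^i = Λ^i_μ (p^μ − q^μ)`, then `|k| = ϱ(p,q)`. -/
theorem statement4 (n : ℕ) (hn : 2 ≤ n) (c : ℝ) (hc : 0 < c)
    (p q : EuclideanSpace ℝ (Fin n)) (Λ : Matrix (Fin (n + 1)) (Fin (n + 1)) ℝ)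
    (hΛ : IsLorentz n Λ) (hCM : CM n c Λ p q) :
    ‖kvec n c Λ p q‖ = relMom n c p q :=
  statement4_general n c hc p q Λ hΛ hCM

end RelBoltz
end
end

section
/- Let p, q ∈ ℝⁿ with p + q ≠ 0. For the boost matrix Λ_b, the vector k ∈ ℝⁿ defined by k^i = (Λ_b)^i_μ (p^μ − q^μ) equals k = −(p+q)(p⁰−q⁰)/√s + (p−q) + (ρ−1)(p+q)((p+q)·(p−q))/|p+q|², where ρ = (p⁰+q⁰)/√s. -/
/-!
Below its first row, `Λ_b` has time column `-ρ v` and spatial block `I + (ρ - 1) v vᵀ / |v|²`.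
Since `p⁰ + q⁰ ≥ |p| + |q| ≥ |p + q| > 0`, the velocity `v = (p + q)/(p⁰ + q⁰)` is a positive
multiple of `u = p + q`, so `v vᵀ / |v|² = u uᵀ / |u|²` and `ρ v = u / √s`. Applying these rows to
`(p⁰ - q⁰, p - q)` gives the formula.
-/

noncomputable section

open MeasureTheory Metric Matrix

namespace RelBoltz

section

variable {n : ℕ} {c : ℝ}

theorem energy_add_pos {p q : EuclideanSpace ℝ (Fin n)} (hpq : p + q ≠ 0) :
    0 < energy n c p + energy n c q :=
  calc 0 < ‖p + q‖ := norm_pos_iff.mpr hpq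
    _ ≤ ‖p‖ + ‖q‖ := norm_add_le p q
    _ ≤ energy n c p + energy n c q := add_le_add (norm_le_energy p) (norm_le_energy q)

theorem div_mul_div_div_sum_sq {ι : Type*} [Fintype ι] (u : ι → ℝ) {a : ℝ} (ha : a ≠ 0)
    (i j : ι) : u i / a * (u j / a) / ∑ k, (u k / a) ^ 2 = u i * u j / ∑ k, u k ^ 2 := by
  simp only [div_pow, ← Finset.sum_div, div_mul_div_comm, ← sq]
  exact div_div_div_cancel_right₀ (pow_ne_zero 2 ha) _ _

theorem boost_succ_zero {p q : EuclideanSpace ℝ (Fin n)} (hpq : p + q ≠ 0) (i : Fin n) :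
    boost n c p q i.succ 0 = -(p + q) i / √(sQ n c p q) := by
  have hE := (energy_add_pos (c := c) hpq).ne'
  simp only [boost, of_apply, Fin.cases_succ, Fin.cases_zero, rhoB, PiLp.add_apply]
  field_simp

theorem boost_succ_succ {p q : EuclideanSpace ℝ (Fin n)} (hpq : p + q ≠ 0) (i j : Fin n) :
    boost n c p q i.succ j.succ =
      (if i = j then 1 else 0) + (rhoB n c p q - 1) * ((p + q) i * (p + q) j / ‖p + q‖ ^ 2) := by
  have hE := (energy_add_pos (c := c) hpq).ne'
  simp only [boost, of_apply, Fin.cases_succ]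
  rw [mul_assoc, mul_div_assoc, div_mul_div_div_sum_sq (fun k => p k + q k) hE,
    EuclideanSpace.real_norm_sq_eq]
  rfl

theorem spat_boost_mulVec {p q : EuclideanSpace ℝ (Fin n)} (hpq : p + q ≠ 0)
    (x : Fin (n + 1) → ℝ) :
    spat n (boost n c p q *ᵥ x) =
      (-x 0 / √(sQ n c p q)) • (p + q) + spat n x +
        ((rhoB n c p q - 1) * dot n (p + q) (spat n x) / ‖p + q‖ ^ 2) • (p + q) := by
  ext i
  simp only [spat, mulVec, dotProduct, Fin.sum_univ_succ, boost_succ_zero hpq, boost_succ_succ hpq]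
  -- keeps `PiLp.add_apply` from splitting `(p + q) i`
  set u := p + q
  simp only [add_mul, Finset.sum_add_distrib, ite_mul, one_mul, zero_mul, Finset.sum_ite_eq,
    Finset.mem_univ, if_true, PiLp.add_apply, PiLp.smul_apply, smul_eq_mul, dot,
    Finset.mul_sum, Finset.sum_div, Finset.sum_mul]
  rw [← add_assoc]
  congr 1
  · ring
  · exact Finset.sum_congr rfl fun j _ => by ring

theorem kvec_eq_spat_mulVec (Λ : Matrix (Fin (n + 1)) (Fin (n + 1)) ℝ)
    (p q : EuclideanSpace ℝ (Fin n)) :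
    kvec n c Λ p q = spat n (Λ *ᵥ (fourVec n c p - fourVec n c q)) :=
  rfl

theorem spat_fourVec_sub (p q : EuclideanSpace ℝ (Fin n)) :
    spat n (fourVec n c p - fourVec n c q) = p - q :=
  rfl

end

theorem statement9_general (n : ℕ) (c : ℝ)
    (p q : EuclideanSpace ℝ (Fin n)) (hpq : p + q ≠ 0) :
    kvec n c (boost n c p q) p q =
      (-(energy n c p - energy n c q) / Real.sqrt (sQ n c p q)) • (p + q) + (p - q) +
        ((rhoB n c p q - 1) * dot n (p + q) (p - q) / ‖p + q‖ ^ 2) • (p + q) := by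
  rw [kvec_eq_spat_mulVec, spat_boost_mulVec hpq, spat_fourVec_sub]
  rfl

/-- For the boost matrix, the vector `k^i = (Λ_b)^i_μ (p^μ − q^μ)` equals
`k = −(p+q)(p⁰−q⁰)/√s + (p−q) + (ρ−1)(p+q)((p+q)·(p−q))/|p+q|²`. -/
theorem statement9 (n : ℕ) (hn : 2 ≤ n) (c : ℝ) (hc : 0 < c)
    (p q : EuclideanSpace ℝ (Fin n)) (hpq : p + q ≠ 0) :
    kvec n c (boost n c p q) p q =
      (-(energy n c p - energy n c q) / Real.sqrt (sQ n c p q)) • (p + q) + (p - q) +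
        ((rhoB n c p q - 1) * dot n (p + q) (p - q) / ‖p + q‖ ^ 2) • (p + q) :=
  statement9_general n c p q hpq

end RelBoltz
end
end
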